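/- arXiv:1807.02619 — 2 statements merged into one kernel-verified Lean document; each statement's English description precedes it below -/
import Mathlib

section
/- Let H be an infinite-dimensional Hilbert space, M ∈ N, and δ ∈ (0,1). Suppose {u_i}_{i=1}^M ⊂ H is a Bessel sequence with Bessel bound 1 and either ‖u_i‖² ≥ δ for all i, or ‖u_i‖² ≤ δ for all i. Then for every sufficiently large K ∈ N there exist vectors φ_1,…,φ_K ∈ H with ‖φ_i‖² ≥ δ for all i (respectively ‖φ_i‖² ≤ δ for all i) such that {u_i}_{i=1}^M ∪ {φ_i}_{i=1}^K is a Parseval frame for its linear span. -/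
noncomputable section

/-- A family `u` is a Bessel sequence with bound `B`:
`∑_{i∈I} |⟨f, u i⟩|² ≤ B ‖f‖²` for all `f` (stated via finite partial sums). -/
def IsBessel {H : Type*} [NormedAddCommGroup H] [InnerProductSpace ℂ H]
    {ι : Type*} (u : ι → H) (B : ℝ) : Prop :=
  ∀ (f : H) (s : Finset ι), (∑ i ∈ s, ‖(inner ℂ (u i) f : ℂ)‖ ^ 2) ≤ B * ‖f‖ ^ 2

/-- The finite family `u ∪ φ` is a Parseval frame for its linear span. -/
def IsParsevalForSpan {H : Type*} [NormedAddCommGroup H] [InnerProductSpace ℂ H]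
    {M K : ℕ} (u : Fin M → H) (φ : Fin K → H) : Prop :=
  ∀ f ∈ Submodule.span ℂ (Set.range u ∪ Set.range φ),
    ((∑ i, ‖(inner ℂ (u i) f : ℂ)‖ ^ 2) + ∑ i, ‖(inner ℂ (φ i) f : ℂ)‖ ^ 2) = ‖f‖ ^ 2

/-!
Diagonalising the frame operator `S = ∑ uᵢ ⊗ uᵢ*` on a finite-dimensional space `V` containing
the `uᵢ` (its eigenvalues `μₖ` lie in `[0, 1]` by the Bessel bound) shows that the pairwise
orthogonal vectors `√(1 - μₖ) bₖ` complete `u` to a Parseval frame of `V`. Mixing these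
`dim V` vectors with the orthonormal columns of a normalised discrete Fourier matrix of size
`K ≥ dim V` does not change the frame operator and produces `K` vectors of equal norm; a trace
computation gives their common squared norm `(dim V - ∑ ‖uᵢ‖²) / K`. Taking `V = span u` makes
it at most `M / K ≤ δ`; taking `V ⊇ span u` of dimension `K`, which exists because `H` is
infinite-dimensional, makes it at least `1 - M / K ≥ δ`.
-/

open Finset Module
open scoped InnerProductSpace ComplexConjugate

section

variable {𝕜 E : Type*} [RCLike 𝕜] [NormedAddCommGroup E] [InnerProductSpace 𝕜 E]
  {ι κ : Type*} [Fintype ι] [Fintype κ]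

theorem norm_sum_sq_of_pairwise_inner_eq_zero {v : ι → E}
    (hv : Pairwise fun p q => ⟪v p, v q⟫_𝕜 = 0) : ‖∑ p, v p‖ ^ 2 = ∑ p, ‖v p‖ ^ 2 := by
  have hdiag : ⟪∑ p, v p, ∑ q, v q⟫_𝕜 = ∑ p, ⟪v p, v p⟫_𝕜 := by
    simp_rw [sum_inner, inner_sum]
    exact sum_congr rfl fun p _ => sum_eq_single p (fun q _ hqp => hv hqp.symm) (by simp)
  rw [← inner_self_eq_norm_sq (𝕜 := 𝕜), hdiag, map_sum]
  simp_rw [inner_self_eq_norm_sq (𝕜 := 𝕜)]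

theorem norm_sum_smul_sq_of_pairwise_inner_eq_zero {v : ι → E}
    (hv : Pairwise fun p q => ⟪v p, v q⟫_𝕜 = 0) (a : ι → 𝕜) :
    ‖∑ p, a p • v p‖ ^ 2 = ∑ p, ‖a p‖ ^ 2 * ‖v p‖ ^ 2 := by
  rw [norm_sum_sq_of_pairwise_inner_eq_zero (𝕜 := 𝕜) fun p q hpq => by
    simp only [inner_smul_left, inner_smul_right, hv hpq, mul_zero]]
  simp_rw [norm_smul, mul_pow]

theorem sum_norm_inner_sum_smul_sq {c : ι → EuclideanSpace 𝕜 κ} (hc : Orthonormal 𝕜 c)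
    (v : ι → E) (x : E) :
    ∑ j, ‖⟪∑ p, c p j • v p, x⟫_𝕜‖ ^ 2 = ∑ p, ‖⟪v p, x⟫_𝕜‖ ^ 2 := by
  have hrow : ∀ j, ‖⟪∑ p, c p j • v p, x⟫_𝕜‖ = ‖(∑ p, conj ⟪v p, x⟫_𝕜 • c p) j‖ := by
    intro j
    rw [sum_inner, ← RCLike.norm_conj, map_sum, WithLp.ofLp_sum, Finset.sum_apply]
    simp [inner_smul_left, mul_comm]
  simp_rw [hrow, ← EuclideanSpace.norm_sq_eq, norm_sum_smul_sq_of_pairwise_inner_eq_zero hc.2,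
    hc.1, RCLike.norm_conj, one_pow, mul_one]

theorem LinearMap.IsSymmetric.re_inner_apply_self_eq_sum [FiniteDimensional 𝕜 E]
    {T : E →ₗ[𝕜] E} (hT : T.IsSymmetric) {n : ℕ} (hn : finrank 𝕜 E = n) (x : E) :
    RCLike.re ⟪T x, x⟫_𝕜 =
      ∑ k, hT.eigenvalues hn k * ‖⟪hT.eigenvectorBasis hn k, x⟫_𝕜‖ ^ 2 := by
  rw [← (hT.eigenvectorBasis hn).sum_inner_mul_inner (T x) x, map_sum]
  refine sum_congr rfl fun k _ => ?_
  rw [hT, hT.apply_eigenvectorBasis, inner_smul_right, ← inner_conj_symm x, mul_assoc,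
    RCLike.conj_mul, ← RCLike.ofReal_pow, ← RCLike.ofReal_mul, RCLike.ofReal_re]

theorem re_inner_sum_rankOne_self_apply (u : ι → E) (x : E) :
    RCLike.re ⟪(∑ i, InnerProductSpace.rankOne 𝕜 (u i) (u i)) x, x⟫_𝕜 =
      ∑ i, ‖⟪u i, x⟫_𝕜‖ ^ 2 := by
  rw [_root_.sum_apply, sum_inner, map_sum]
  refine sum_congr rfl fun i _ => ?_
  rw [InnerProductSpace.rankOne_apply, inner_smul_left, RCLike.conj_mul, ← RCLike.ofReal_pow,
    RCLike.ofReal_re]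

theorem exists_pairwise_orthogonal_parseval_completion [FiniteDimensional 𝕜 E] (u : ι → E)
    (hu : ∀ x, ∑ i, ‖⟪u i, x⟫_𝕜‖ ^ 2 ≤ ‖x‖ ^ 2) :
    ∃ v : Fin (finrank 𝕜 E) → E, (Pairwise fun k l => ⟪v k, v l⟫_𝕜 = 0) ∧
      ∀ x, ∑ i, ‖⟪u i, x⟫_𝕜‖ ^ 2 + ∑ k, ‖⟪v k, x⟫_𝕜‖ ^ 2 = ‖x‖ ^ 2 := by
  set S := ∑ i, InnerProductSpace.rankOne 𝕜 (u i) (u i)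
  have hS : (S : E →ₗ[𝕜] E).IsSymmetric :=
    (ContinuousLinearMap.isPositive_sum _ fun i _ =>
      InnerProductSpace.isPositive_rankOne_self (u i)).isSymmetric
  set b := hS.eigenvectorBasis rfl
  set μ := hS.eigenvalues rfl
  have hframe (x : E) : ∑ i, ‖⟪u i, x⟫_𝕜‖ ^ 2 = ∑ k, μ k * ‖⟪b k, x⟫_𝕜‖ ^ 2 := by
    rw [← re_inner_sum_rankOne_self_apply, ← hS.re_inner_apply_self_eq_sum]
    rfl
  have hμ (k) : μ k ≤ 1 := by
    have := hu (b k)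
    rw [hframe, b.orthonormal.1 k, Fintype.sum_eq_single k fun l hl => by
      rw [b.orthonormal.2 hl]; simp] at this
    simpa using this
  refine ⟨fun k => ((√(1 - μ k) : ℝ) : 𝕜) • b k, fun k l hkl => ?_, fun x => ?_⟩
  · simp [inner_smul_left, inner_smul_right, b.orthonormal.2 hkl]
  · have hv (k) : ‖⟪((√(1 - μ k) : ℝ) : 𝕜) • b k, x⟫_𝕜‖ ^ 2 = (1 - μ k) * ‖⟪b k, x⟫_𝕜‖ ^ 2 := by
      rw [inner_smul_left, norm_mul, RCLike.norm_conj, mul_pow, RCLike.norm_ofReal,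
        sq_abs, Real.sq_sqrt (sub_nonneg.mpr (hμ k))]
    simp_rw [hframe, hv, ← sum_add_distrib, ← add_mul, add_sub_cancel, one_mul]
    exact b.sum_sq_norm_inner_right x

theorem sum_norm_sq_eq_finrank_of_parseval [FiniteDimensional 𝕜 E] {ψ : ι → E}
    (hψ : ∀ x, ∑ i, ‖⟪ψ i, x⟫_𝕜‖ ^ 2 = ‖x‖ ^ 2) : ∑ i, ‖ψ i‖ ^ 2 = finrank 𝕜 E := by
  set b := stdOrthonormalBasis 𝕜 E
  calc ∑ i, ‖ψ i‖ ^ 2 = ∑ i, ∑ l, ‖⟪ψ i, b l⟫_𝕜‖ ^ 2 := by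
        simp_rw [b.sum_sq_norm_inner_left]
    _ = ∑ l, ‖b l‖ ^ 2 := by rw [sum_comm]; simp_rw [hψ]
    _ = finrank 𝕜 E := by simp [b.orthonormal.1]

end

theorem EuclideanSpace.exists_orthonormal_flat {ι κ : Type*} [Fintype ι] [Fintype κ]
    (h : Fintype.card ι ≤ Fintype.card κ) :
    ∃ c : ι → EuclideanSpace ℂ κ, Orthonormal ℂ c ∧
      ∀ p j, ‖c p j‖ ^ 2 = (Fintype.card κ : ℝ)⁻¹ := by
  classical
  set n := Fintype.card κ
  rcases Nat.eq_zero_or_pos n with hn | hn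
  · have : IsEmpty ι := Fintype.card_eq_zero_iff.mp (by omega)
    exact ⟨isEmptyElim, Orthonormal.of_isEmpty _, isEmptyElim⟩
  have : NeZero n := ⟨hn.ne'⟩
  let σ : κ ≃ ZMod n := (Fintype.equivFin κ).trans (ZMod.finEquiv n).toEquiv
  obtain ⟨e⟩ : Nonempty (ι ↪ ZMod n) :=
    Function.Embedding.nonempty_of_card_le (by simpa using h)
  set ψ : AddChar (ZMod n) ℂ := ZMod.stdAddChar
  -- columns of the normalised discrete Fourier matrix of `ZMod n`, restricted along `e`
  refine ⟨fun p => WithLp.toLp 2 fun j => ((√n)⁻¹ : ℂ) * ψ (σ j * e p), ?_, ?_⟩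
  · rw [orthonormal_iff_ite]
    intro p q
    have hψ : ∀ a b, conj (ψ a) * ψ b = ψ (b - a) := fun a b => by
      rw [← AddChar.map_neg_eq_conj, ← AddChar.map_add_eq_mul, neg_add_eq_sub]
    calc ⟪_, _⟫_ℂ = (n : ℂ)⁻¹ * ∑ g : ZMod n, ψ (g * (e q - e p)) := by
          rw [← σ.sum_comp, Finset.mul_sum]
          simp only [PiLp.inner_apply, RCLike.inner_apply, map_mul, map_inv₀, Complex.conj_ofReal]
          refine sum_congr rfl fun j _ => ?_
          have hsq : ((√n : ℝ) : ℂ)⁻¹ * ((√n : ℝ) : ℂ)⁻¹ = (n : ℂ)⁻¹ := by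
            rw [← mul_inv, ← Complex.ofReal_mul, Real.mul_self_sqrt n.cast_nonneg,
              Complex.ofReal_natCast]
          rw [mul_sub, ← hψ]
          linear_combination (ψ (σ j * e q) * conj (ψ (σ j * e p))) * hsq
      _ = if p = q then 1 else 0 := by
          simp_rw [AddChar.sum_mulShift (ψ := ψ) _ (ZMod.isPrimitive_stdAddChar n), sub_eq_zero,
            e.injective.eq_iff, eq_comm (a := q), ZMod.card]
          split_ifs <;> simp [n, hn.ne']
  · intro p j
    simp [AddChar.norm_apply]

theorem exists_equal_norm_parseval_completion {E : Type*} [NormedAddCommGroup E]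
    [InnerProductSpace ℂ E] [FiniteDimensional ℂ E] {ι κ : Type*} [Fintype ι] [Fintype κ]
    (u : ι → E) (hu : ∀ x, ∑ i, ‖⟪u i, x⟫_ℂ‖ ^ 2 ≤ ‖x‖ ^ 2)
    (hκ : finrank ℂ E ≤ Fintype.card κ) :
    ∃ φ : κ → E, (∀ j, ‖φ j‖ ^ 2 = (finrank ℂ E - ∑ i, ‖u i‖ ^ 2) / Fintype.card κ) ∧
      ∀ x, ∑ i, ‖⟪u i, x⟫_ℂ‖ ^ 2 + ∑ j, ‖⟪φ j, x⟫_ℂ‖ ^ 2 = ‖x‖ ^ 2 := by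
  obtain ⟨v, hv_orth, hv⟩ := exists_pairwise_orthogonal_parseval_completion u hu
  obtain ⟨c, hc, hc_flat⟩ := EuclideanSpace.exists_orthonormal_flat (ι := Fin (finrank ℂ E))
    (κ := κ) (by simpa using hκ)
  have htrace : ∑ i, ‖u i‖ ^ 2 + ∑ k, ‖v k‖ ^ 2 = finrank ℂ E := by
    simpa [Fintype.sum_sum_type] using
      sum_norm_sq_eq_finrank_of_parseval (ψ := Sum.elim u v) (by simpa [Fintype.sum_sum_type])
  refine ⟨fun j => ∑ k, c k j • v k, fun j => ?_, fun x => ?_⟩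
  · rw [norm_sum_smul_sq_of_pairwise_inner_eq_zero hv_orth]
    simp_rw [hc_flat, ← mul_sum, ← htrace, add_sub_cancel_left, inv_mul_eq_div]
  · rw [sum_norm_inner_sum_smul_sq hc]
    exact hv x

theorem Submodule.exists_le_finrank_eq {K V : Type*} [DivisionRing K] [AddCommGroup V]
    [Module K V] (hV : ¬FiniteDimensional K V) (W : Submodule K V) [FiniteDimensional K W]
    {n : ℕ} (hn : finrank K W ≤ n) :
    ∃ U : Submodule K V, W ≤ U ∧ FiniteDimensional K U ∧ finrank K U = n := by
  induction n, hn using Nat.le_induction with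
  | base => exact ⟨W, le_rfl, inferInstance, rfl⟩
  | succ n _ ih =>
    obtain ⟨U, hWU, hU, rfl⟩ := ih
    have hU_ne_top : U ≠ ⊤ := fun hU_top => by
      subst hU_top
      exact hV Submodule.topEquiv.finiteDimensional
    obtain ⟨x, -, hx⟩ := SetLike.exists_of_lt (lt_top_iff_ne_top.mpr hU_ne_top)
    have hlt : finrank K U < finrank K ↥(U ⊔ K ∙ x) :=
      Submodule.finrank_lt_finrank_of_lt <| lt_of_le_of_ne le_sup_left fun h =>
        hx (h ▸ Submodule.mem_sup_right (Submodule.mem_span_singleton_self x))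
    have hle : finrank K ↥(U ⊔ K ∙ x) ≤ finrank K U + 1 :=
      (Submodule.finrank_add_le_finrank_add_finrank U _).trans
        (Nat.add_le_add_left ((finrank_span_le_card ({x} : Set V)).trans (by simp)) _)
    exact ⟨U ⊔ K ∙ x, hWU.trans le_sup_left, inferInstance, by omega⟩

theorem IsBessel.norm_sq_le {H : Type*} [NormedAddCommGroup H] [InnerProductSpace ℂ H]
    {ι : Type*} {u : ι → H} {B : ℝ} (hu : IsBessel u B) (hB : 0 ≤ B) (i : ι) :
    ‖u i‖ ^ 2 ≤ B := by
  have h : (‖u i‖ ^ 2) ^ 2 ≤ B * ‖u i‖ ^ 2 := by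
    simpa [inner_self_eq_norm_sq_to_K] using hu (u i) {i}
  rcases eq_or_ne (u i) 0 with hi | hi
  · simpa [hi] using hB
  · exact le_of_mul_le_mul_right (by nlinarith) (pow_pos (norm_pos_iff.mpr hi) 2)

theorem IsBessel.exists_isParsevalForSpan {H : Type*} [NormedAddCommGroup H]
    [InnerProductSpace ℂ H] {M : ℕ} {u : Fin M → H} (hu : IsBessel u 1)
    (V : Submodule ℂ H) [FiniteDimensional ℂ V] (huV : ∀ i, u i ∈ V) {K : ℕ}
    (hK : finrank ℂ V ≤ K) :
    ∃ φ : Fin K → H, (∀ j, ‖φ j‖ ^ 2 = (finrank ℂ V - ∑ i, ‖u i‖ ^ 2) / K) ∧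
      IsParsevalForSpan u φ := by
  set u' : Fin M → V := fun i => ⟨u i, huV i⟩
  obtain ⟨φ, hφ_norm, hφ⟩ := exists_equal_norm_parseval_completion (κ := Fin K) u'
    (fun x => by simpa using hu x univ) (by simpa using hK)
  refine ⟨fun j => φ j, fun j => by simpa [u'] using hφ_norm j, fun f hf => ?_⟩
  have hfV : f ∈ V := Submodule.span_le.mpr (Set.union_subset (Set.range_subset_iff.mpr huV)
    (Set.range_subset_iff.mpr fun j => (φ j).2)) hf
  simpa [u'] using hφ ⟨f, hfV⟩

theorem completion_to_parseval_frame_general (H : Type) [NormedAddCommGroup H]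
    [InnerProductSpace ℂ H] (hinf : ¬ FiniteDimensional ℂ H)
    (M : ℕ) (δ : ℝ) (hδ : δ ∈ Set.Ioo (0 : ℝ) 1)
    (u : Fin M → H) (hBessel : IsBessel u 1) :
    ((∀ i, δ ≤ ‖u i‖ ^ 2) →
      ∃ K₀ : ℕ, ∀ K, K₀ ≤ K →
        ∃ φ : Fin K → H, (∀ i, δ ≤ ‖φ i‖ ^ 2) ∧ IsParsevalForSpan u φ) ∧
    ((∀ i, ‖u i‖ ^ 2 ≤ δ) →
      ∃ K₀ : ℕ, ∀ K, K₀ ≤ K →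
        ∃ φ : Fin K → H, (∀ i, ‖φ i‖ ^ 2 ≤ δ) ∧ IsParsevalForSpan u φ) := by
  obtain ⟨hδ0, hδ1⟩ := hδ
  set W := Submodule.span ℂ (Set.range u)
  have huW (i) : u i ∈ W := Submodule.subset_span ⟨i, rfl⟩
  have : FiniteDimensional ℂ W := FiniteDimensional.span_of_finite ℂ (Set.finite_range u)
  have hWM : finrank ℂ W ≤ M := (finrank_range_le_card u).trans_eq (Fintype.card_fin M)
  have hsum : ∑ i, ‖u i‖ ^ 2 ≤ M :=
    (sum_le_sum fun i _ => hBessel.norm_sq_le zero_le_one i).trans_eq (by simp)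
  refine ⟨fun _ => ⟨⌈M / (1 - δ)⌉₊, fun K hK => ?_⟩, fun _ => ⟨⌈M / δ⌉₊, fun K hK => ?_⟩⟩
  · have hMK : (M : ℝ) ≤ (1 - δ) * K := (div_le_iff₀' (by linarith)).mp (Nat.ceil_le.mp hK)
    obtain ⟨V, hWV, _, hVK⟩ := W.exists_le_finrank_eq hinf
      (hWM.trans (by exact_mod_cast (by nlinarith : (M : ℝ) ≤ K)))
    obtain ⟨φ, hφ_norm, hφ⟩ := hBessel.exists_isParsevalForSpan V (fun i => hWV (huW i)) hVK.le
    refine ⟨φ, fun j => ?_, hφ⟩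
    rw [hφ_norm, hVK, le_div_iff₀ (by exact_mod_cast j.pos)]
    linarith
  · have hMK : (M : ℝ) ≤ δ * K := (div_le_iff₀' hδ0).mp (Nat.ceil_le.mp hK)
    obtain ⟨φ, hφ_norm, hφ⟩ := hBessel.exists_isParsevalForSpan W huW
      (hWM.trans (by exact_mod_cast (by nlinarith : (M : ℝ) ≤ K)))
    refine ⟨φ, fun j => ?_, hφ⟩
    rw [hφ_norm]
    have hWM' : (finrank ℂ W : ℝ) ≤ M := by exact_mod_cast hWM
    have hsum_nonneg : 0 ≤ ∑ i, ‖u i‖ ^ 2 := by positivity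
    exact div_le_of_le_mul₀ K.cast_nonneg hδ0.le (by linarith)

/-- a Bessel sequence with bound 1 whose norms² are all `≥ δ`
(resp. all `≤ δ`) can be completed, by sufficiently many vectors with norms² `≥ δ`
(resp. `≤ δ`), to a Parseval frame for its linear span. -/
theorem completion_to_parseval_frame (H : Type) [NormedAddCommGroup H]
    [InnerProductSpace ℂ H] [CompleteSpace H] (hinf : ¬ FiniteDimensional ℂ H)
    (M : ℕ) (δ : ℝ) (hδ : δ ∈ Set.Ioo (0 : ℝ) 1)
    (u : Fin M → H) (hBessel : IsBessel u 1) :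
    ((∀ i, δ ≤ ‖u i‖ ^ 2) →
      ∃ K₀ : ℕ, ∀ K, K₀ ≤ K →
        ∃ φ : Fin K → H, (∀ i, δ ≤ ‖φ i‖ ^ 2) ∧ IsParsevalForSpan u φ) ∧
    ((∀ i, ‖u i‖ ^ 2 ≤ δ) →
      ∃ K₀ : ℕ, ∀ K, K₀ ≤ K →
        ∃ φ : Fin K → H, (∀ i, ‖φ i‖ ^ 2 ≤ δ) ∧ IsParsevalForSpan u φ) :=
  completion_to_parseval_frame_general H hinf M δ hδ u hBessel
end
end

section
/- Given a measurable set S ⊂ T of positive measure, the following are equivalent: (i) there exist r ∈ N and a decomposition Z = ⋃_{j=1}^r Λ_j such that E(Λ_j) is a Riesz sequence in L²(S) for all j ∈ {1,…,r}; (ii) there exist d ∈ N and a syndetic set Λ ⊆ Z with γ(Λ) = d such that E(Λ) is a Riesz sequence in L²(S). -/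
/-!
Both conditions depend only on the translation-invariant combinatorics of `ℤ`: multiplying a
trigonometric polynomial by `e^{itx}` shifts its frequencies by `t` without changing its modulus, so
`E(Λ')` is a Riesz sequence as soon as `E(Λ)` is one and every finite subset of `Λ'` has a
translate inside `Λ`.

A syndetic `Λ` with gaps at most `d` has `d` translates covering `ℤ`. Conversely, by Brown's lemma
one colour class of a finite colouring of `ℤ` is piecewise syndetic, i.e. meets all windows of a
fixed length inside arbitrarily long intervals. Taking a limit of these intervals along a
nonprincipal ultrafilter gives a syndetic set all of whose finite subsets translate into that
colour class.
-/

open MeasureTheory Real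

noncomputable section

/-- The trigonometric polynomial `∑ a_n e^{inx}` with finitely supported coefficients. -/
def expSumZ (a : ℤ →₀ ℂ) (x : ℝ) : ℂ :=
  ∑ n ∈ a.support, a n * Complex.exp (Complex.I * (n : ℂ) * (x : ℂ))

/-- The exponential system `E(Λ) = {e^{iλx}}_{λ∈Λ}` is a Riesz sequence in `L²(S)`,
where the torus `𝕋 = ℝ/2πℤ` is identified with `[0,2π)`. -/
def IsRieszExpZ (S : Set ℝ) (Λ : Set ℤ) : Prop :=
  ∃ A B : ℝ, 0 < A ∧ A ≤ B ∧
    ∀ a : ℤ →₀ ℂ, (↑a.support : Set ℤ) ⊆ Λ →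
      ((A * ∑ n ∈ a.support, ‖a n‖ ^ 2) ≤ ∫ x in S, ‖expSumZ a x‖ ^ 2) ∧
      ((∫ x in S, ‖expSumZ a x‖ ^ 2) ≤ B * ∑ n ∈ a.support, ‖a n‖ ^ 2)

/-- `Λ ⊆ ℤ` is syndetic with gaps between consecutive elements at most `d`. -/
def SyndeticWithGap (Λ : Set ℤ) (d : ℝ) : Prop :=
  (∀ n : ℤ, ∃ lam ∈ Λ, lam ≤ n) ∧
  (∀ lam ∈ Λ, ∃ mu ∈ Λ, lam < mu ∧ (mu : ℝ) ≤ (lam : ℝ) + d)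

open Set

theorem expSumZ_embDomain_addRight (t : ℤ) (a : ℤ →₀ ℂ) (x : ℝ) :
    expSumZ (a.embDomain (Equiv.addRight t).toEmbedding) x
      = Complex.exp ((t * x : ℝ) * Complex.I) * expSumZ a x := by
  simp only [expSumZ, Finsupp.support_embDomain, Finset.sum_map, Finsupp.embDomain_apply_self,
    Finset.mul_sum]
  refine Finset.sum_congr rfl fun n _ => ?_
  simp only [Equiv.coe_toEmbedding, Equiv.coe_addRight]
  push_cast
  rw [show Complex.I * (n + t) * x = Complex.I * n * x + t * x * Complex.I by ring, Complex.exp_add]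
  ring

theorem norm_expSumZ_embDomain_addRight (t : ℤ) (a : ℤ →₀ ℂ) (x : ℝ) :
    ‖expSumZ (a.embDomain (Equiv.addRight t).toEmbedding) x‖ = ‖expSumZ a x‖ := by
  rw [expSumZ_embDomain_addRight, norm_mul, Complex.norm_exp_ofReal_mul_I, one_mul]

theorem IsRieszExpZ.of_forall_finset_translate {S : Set ℝ} {Λ Λ' : Set ℤ} (h : IsRieszExpZ S Λ)
    (htrans : ∀ F : Finset ℤ, ↑F ⊆ Λ' → ∃ t : ℤ, ∀ k ∈ F, k + t ∈ Λ) : IsRieszExpZ S Λ' := by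
  obtain ⟨A, B, hA, hAB, h⟩ := h
  refine ⟨A, B, hA, hAB, fun a ha => ?_⟩
  obtain ⟨t, ht⟩ := htrans a.support ha
  set b := a.embDomain (Equiv.addRight t).toEmbedding
  have hb : (↑b.support : Set ℤ) ⊆ Λ := by
    rw [Finsupp.support_embDomain, Finset.coe_map]
    rintro _ ⟨k, hk, rfl⟩
    exact ht k hk
  have hcoeff : ∑ n ∈ b.support, ‖b n‖ ^ 2 = ∑ n ∈ a.support, ‖a n‖ ^ 2 := by
    simp only [b, Finsupp.support_embDomain, Finset.sum_map, Finsupp.embDomain_apply_self]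
  simpa only [hcoeff, b, norm_expSumZ_embDomain_addRight] using h b hb

def IsThick (A : Set ℤ) : Prop :=
  ∀ N : ℕ, ∃ a : ℤ, Icc a (a + N) ⊆ A

def IsPiecewiseSyndetic (Λ : Set ℤ) (d : ℕ) : Prop :=
  IsThick {k | ∃ m ∈ Λ, m ∈ Icc k (k + d)}

theorem IsThick.of_union_of_forall_not_isPiecewiseSyndetic {A B : Set ℤ} (h : IsThick (A ∪ B))
    (hB : ∀ d, ¬IsPiecewiseSyndetic B d) : IsThick A := by
  intro N
  obtain ⟨N', hN'⟩ : ∃ N' : ℕ, ∀ a : ℤ, ∃ k ∈ Icc a (a + N'), ∀ m ∈ B, m ∉ Icc k (k + N) := by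
    simpa [IsPiecewiseSyndetic, IsThick, subset_def, and_assoc] using hB N
  obtain ⟨a, ha⟩ := h (N' + N)
  obtain ⟨k, hk, hfree⟩ := hN' a
  refine ⟨k, fun m hm => (ha ⟨?_, ?_⟩).resolve_right fun hmB => hfree m hmB hm⟩
  · linarith [hk.1, hm.1]
  · push_cast; linarith [hk.2, hm.2]

/-- Brown's lemma. -/
theorem exists_isPiecewiseSyndetic_of_isThick_biUnion {ι : Type*} (Λ : ι → Set ℤ) (J : Finset ι)
    (hJ : IsThick (⋃ j ∈ J, Λ j)) : ∃ j ∈ J, ∃ d, IsPiecewiseSyndetic (Λ j) d := by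
  classical
  induction J using Finset.strongInduction with
  | _ J ih =>
    obtain ⟨a, ha⟩ := hJ 0
    obtain ⟨j, hj, -⟩ := mem_iUnion₂.1 (ha ⟨le_rfl, by simp⟩)
    by_cases hps : ∃ d, IsPiecewiseSyndetic (Λ j) d
    · exact ⟨j, hj, hps⟩
    rw [not_exists] at hps
    rw [← Finset.insert_erase hj, Finset.set_biUnion_insert, union_comm] at hJ
    obtain ⟨i, hi, hd⟩ := ih _ (Finset.erase_ssubset hj)
      (hJ.of_union_of_forall_not_isPiecewiseSyndetic hps)
    exact ⟨i, Finset.mem_of_mem_erase hi, hd⟩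

theorem IsPiecewiseSyndetic.exists_dense_forall_finset_translate {Λ : Set ℤ} {d : ℕ}
    (h : IsPiecewiseSyndetic Λ d) :
    ∃ L : Set ℤ, (∀ k : ℤ, ∃ l ∈ L, l ∈ Icc k (k + d)) ∧
      ∀ F : Finset ℤ, ↑F ⊆ L → ∃ t : ℤ, ∀ k ∈ F, k + t ∈ Λ := by
  choose a ha using fun N : ℕ => h (2 * N)
  let U : Ultrafilter ℕ := Ultrafilter.of Filter.atTop
  -- `a N + N` is the midpoint of the `N`-th interval, so any fixed `a N + N + k` lies in it
  -- for `N` large.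
  refine ⟨{k | {N | a N + N + k ∈ Λ} ∈ U}, fun k => ?_, fun F hF => ?_⟩
  · have hwindow : {N : ℕ | k.natAbs ≤ N} ⊆ ⋃ i ∈ Iic d, {N | a N + N + (k + i) ∈ Λ} := by
      intro N (hN : k.natAbs ≤ N)
      obtain ⟨m, hm, hkm, hmd⟩ := ha N (a := a N + N + k) ⟨by omega, by push_cast; omega⟩
      refine mem_iUnion₂.2 ⟨(m - (a N + N + k)).toNat, by simp only [mem_Iic]; omega, ?_⟩
      show _ ∈ Λ
      convert hm using 1
      omega
    have hlarge : {N : ℕ | k.natAbs ≤ N} ∈ U := Ultrafilter.of_le _ (Filter.eventually_ge_atTop _)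
    obtain ⟨i, hi, hiU⟩ :=
      (Ultrafilter.finite_biUnion_mem_iff (finite_Iic d)).1 (Filter.mem_of_superset hlarge hwindow)
    exact ⟨k + i, hiU, by omega, by simp only [mem_Iic] at hi; omega⟩
  · have hU : (⋂ k ∈ F, {N | a N + N + k ∈ Λ}) ∈ U :=
      (Filter.biInter_finset_mem F).2 fun k hk => hF hk
    obtain ⟨N, hN⟩ := Filter.nonempty_of_mem hU
    exact ⟨a N + N, fun k hk => add_comm (a N + N : ℤ) k ▸ mem_iInter₂.1 hN k hk⟩

theorem syndeticWithGap_succ_of_forall_exists_mem_Icc {L : Set ℤ} {d : ℕ}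
    (h : ∀ k : ℤ, ∃ l ∈ L, l ∈ Icc k (k + d)) : SyndeticWithGap L (d + 1 : ℕ) := by
  refine ⟨fun n => ?_, fun l _ => ?_⟩
  · obtain ⟨l, hl, hlk⟩ := h (n - d)
    exact ⟨l, hl, by linarith [hlk.2]⟩
  · obtain ⟨m, hm, hmk⟩ := h (l + 1)
    refine ⟨m, hm, by linarith [hmk.1], ?_⟩
    exact_mod_cast (show m ≤ l + (d + 1 : ℕ) by push_cast; linarith [hmk.2])

theorem SyndeticWithGap.iUnion_fin_sub_mem_eq_univ {Λ : Set ℤ} {d : ℕ} (h : SyndeticWithGap Λ d) :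
    ⋃ j : Fin d, {n : ℤ | n - j ∈ Λ} = univ := by
  refine eq_univ_of_forall fun n => ?_
  obtain ⟨l₀, hl₀, hl₀n⟩ := h.1 n
  obtain ⟨l, ⟨hl, hln⟩, hmax⟩ := Int.exists_greatest_of_bdd (P := fun z => z ∈ Λ ∧ z ≤ n)
    ⟨n, fun _ hz => hz.2⟩ ⟨l₀, hl₀, hl₀n⟩
  obtain ⟨m, hm, hlm, hmd⟩ := h.2 l hl
  have hmd : m ≤ l + d := by exact_mod_cast hmd
  have hnm : n < m := lt_of_not_ge fun hmn => (hmax m ⟨hm, hmn⟩).not_gt hlm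
  refine mem_iUnion.2 ⟨⟨(n - l).toNat, by omega⟩, ?_⟩
  show n - ((n - l).toNat : ℤ) ∈ Λ
  rwa [show n - ((n - l).toNat : ℤ) = l by omega]

theorem feichtinger_iff_syndetic_general (S : Set ℝ) :
    (∃ r : ℕ, 0 < r ∧ ∃ Λ : Fin r → Set ℤ, (⋃ j, Λ j) = Set.univ ∧
      ∀ j, IsRieszExpZ S (Λ j)) ↔
    (∃ d : ℕ, 0 < d ∧ ∃ Λ : Set ℤ, SyndeticWithGap Λ d ∧ IsRieszExpZ S Λ) := by
  constructor
  · rintro ⟨r, -, Λ, hcover, hRiesz⟩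
    have hthick : IsThick (⋃ j ∈ Finset.univ, Λ j) := fun N => ⟨0, by simp [hcover]⟩
    obtain ⟨j, -, d, hps⟩ := exists_isPiecewiseSyndetic_of_isThick_biUnion Λ _ hthick
    obtain ⟨L, hdense, htrans⟩ := hps.exists_dense_forall_finset_translate
    exact ⟨d + 1, d.succ_pos, L, syndeticWithGap_succ_of_forall_exists_mem_Icc hdense,
      (hRiesz j).of_forall_finset_translate htrans⟩
  · rintro ⟨d, hd, Λ, hsyn, hRiesz⟩
    refine ⟨d, hd, fun j => {n | n - j ∈ Λ}, hsyn.iUnion_fin_sub_mem_eq_univ, fun j => ?_⟩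
    exact hRiesz.of_forall_finset_translate fun F hF =>
      ⟨-j, fun k hk => sub_eq_add_neg k (j : ℤ) ▸ hF hk⟩

/-- Lawton, Paulsen: `ℤ` decomposes into finitely many sets whose
exponential systems are Riesz sequences in `L²(S)` iff there is a syndetic `Λ ⊆ ℤ` whose
exponential system is a Riesz sequence in `L²(S)`. -/
theorem feichtinger_iff_syndetic (S : Set ℝ) (hS : S ⊆ Set.Ico 0 (2 * π))
    (hmeas : MeasurableSet S) (hpos : 0 < volume S) :
    (∃ r : ℕ, 0 < r ∧ ∃ Λ : Fin r → Set ℤ, (⋃ j, Λ j) = Set.univ ∧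
      ∀ j, IsRieszExpZ S (Λ j)) ↔
    (∃ d : ℕ, 0 < d ∧ ∃ Λ : Set ℤ, SyndeticWithGap Λ d ∧ IsRieszExpZ S Λ) :=
  feichtinger_iff_syndetic_general S
end
end
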